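/- arXiv:2401.11701 — 2 statements merged into one kernel-verified Lean document; each statement's English description precedes it below -/
import Mathlib

section
/- The expected ESC score m ↦ E[1{S>v}(φ'(m)(m - X_j) - φ(m) + φ(X_j))] is uniquely minimized over m ∈ ℝ at m = E[X_j | S > v], provided P(S > v) > 0 and φ is strictly convex and differentiable. -/
open MeasureTheory ProbabilityTheory Set

variable {Ω : Type*} [MeasureSpace Ω]

/-!
For every outcome `y`, the score of `m` minus the score of `c` equals the score of `m` at `c`
plus a term affine in `y - c` (`escScore_sub_escScore`). Taking `c` to be the conditional mean
of `X_j` on `{S > v}`, the affine term integrates to zero over that event, so the excess expected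
score of `m` is `P(S > v)` times a Bregman divergence of `φ`, positive for `m ≠ c` by strict
convexity.
-/

/-- The Bregman divergence `φ y - φ m - φ' m * (y - m)`, written in the form of the ESC score. -/
def escScore (φ φ' : ℝ → ℝ) (m y : ℝ) : ℝ :=
  φ' m * (m - y) - φ m + φ y

lemma escScore_pos {S : Set ℝ} {φ φ' : ℝ → ℝ} {m y : ℝ} (hφ : StrictConvexOn ℝ S φ)
    (hm : m ∈ S) (hy : y ∈ S) (hderiv : HasDerivAt φ (φ' m) m) (hne : m ≠ y) :
    0 < escScore φ φ' m y := by
  unfold escScore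
  rcases hne.lt_or_gt with hlt | hgt
  · have hslope := hφ.lt_slope_of_hasDerivAt hm hy hlt hderiv
    rw [slope_def_field, lt_div_iff₀ (sub_pos.2 hlt)] at hslope
    linarith
  · have hslope := hφ.slope_lt_of_hasDerivAt hy hm hgt hderiv
    rw [slope_def_field, div_lt_iff₀ (sub_pos.2 hgt)] at hslope
    linarith

lemma escScore_sub_escScore (φ φ' : ℝ → ℝ) (m c y : ℝ) :
    escScore φ φ' m y - escScore φ φ' c y = escScore φ φ' m c + (φ' c - φ' m) * (y - c) := by
  unfold escScore
  ring

lemma integral_indicator_escScore_sub_setAverage {α : Type*} [MeasurableSpace α]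
    {μ : Measure α} {s : Set α} {Y : α → ℝ} (φ φ' : ℝ → ℝ) (m : ℝ)
    (hs : MeasurableSet s) (hμs : μ s ≠ ⊤) (hY : IntegrableOn Y s μ)
    (hm : Integrable (s.indicator fun a => escScore φ φ' m (Y a)) μ)
    (hc : Integrable (s.indicator fun a => escScore φ φ' (⨍ a in s, Y a ∂μ) (Y a)) μ) :
    ∫ a, s.indicator (fun a => escScore φ φ' m (Y a)) a ∂μ
        - ∫ a, s.indicator (fun a => escScore φ φ' (⨍ a in s, Y a ∂μ) (Y a)) a ∂μ
      = μ.real s * escScore φ φ' m (⨍ a in s, Y a ∂μ) := by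
  set c := ⨍ a in s, Y a ∂μ
  have hconst : IntegrableOn (fun _ => escScore φ φ' m c) s μ := integrableOn_const hμs
  have hlin : IntegrableOn (fun a => (φ' c - φ' m) * (Y a - c)) s μ :=
    (hY.sub (integrableOn_const hμs)).const_mul _
  have hcentered : ∫ a in s, (Y a - c) ∂μ = 0 := setAverage_sub_setAverage hμs Y
  rw [← integral_sub hm hc, ← indicator_sub, integral_indicator hs]
  simp_rw [escScore_sub_escScore]
  rw [integral_add hconst hlin, integral_const_mul, hcentered, setIntegral_const, smul_eq_mul,
    mul_zero, add_zero]

/-- The expected ESC score is uniquely minimized at `m = E[X_j | S > v]`. -/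
theorem stmt7 [IsProbabilityMeasure (ℙ : Measure Ω)]
    (d : ℕ) (X : Fin d → Ω → ℝ)
    (hXmeas : ∀ i, Measurable (X i)) (hXint : ∀ i, Integrable (X i) ℙ)
    (j : Fin d) (v : ℝ)
    (hv : 0 < (ℙ {ω | v < ∑ i, X i ω}).toReal)
    (φ φ' : ℝ → ℝ)
    (hconv : StrictConvexOn ℝ Set.univ φ)
    (hderiv : ∀ y, HasDerivAt φ (φ' y) y)
    (hint : ∀ m : ℝ, Integrable
      (fun ω => if v < ∑ i, X i ω then φ' m * (m - X j ω) - φ m + φ (X j ω) else 0) ℙ) :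
    ∀ m : ℝ,
      m ≠ (∫ ω in {ω | v < ∑ i, X i ω}, X j ω) / (ℙ {ω | v < ∑ i, X i ω}).toReal →
      (∫ ω, if v < ∑ i, X i ω then
          φ' ((∫ ω' in {ω' | v < ∑ i, X i ω'}, X j ω') / (ℙ {ω' | v < ∑ i, X i ω'}).toReal)
              * ((∫ ω' in {ω' | v < ∑ i, X i ω'}, X j ω') / (ℙ {ω' | v < ∑ i, X i ω'}).toReal
                  - X j ω)
            - φ ((∫ ω' in {ω' | v < ∑ i, X i ω'}, X j ω') / (ℙ {ω' | v < ∑ i, X i ω'}).toReal)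
            + φ (X j ω)
        else 0)
        < ∫ ω, if v < ∑ i, X i ω then φ' m * (m - X j ω) - φ m + φ (X j ω) else 0 := by
  intro m hm
  set A : Set Ω := {ω | v < ∑ i, X i ω}
  have hA : MeasurableSet A :=
    measurableSet_lt measurable_const (Finset.measurable_sum _ fun i _ => hXmeas i)
  have hmean : (∫ ω in A, X j ω) / (ℙ A).toReal = ⨍ ω in A, X j ω := by
    rw [setAverage_eq, measureReal_def, smul_eq_mul, div_eq_inv_mul]
  have hscore : ∀ m, (fun ω => if v < ∑ i, X i ω then φ' m * (m - X j ω) - φ m + φ (X j ω)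
      else 0) = A.indicator fun ω => escScore φ φ' m (X j ω) := by
    intro m
    funext ω
    simp only [indicator_apply, A, mem_ofPred_eq, escScore]
  rw [hmean] at hm ⊢
  rw [← sub_pos, hscore, hscore, integral_indicator_escScore_sub_setAverage φ φ' m hA
    (measure_ne_top _ _) (hXint j).integrableOn (hscore m ▸ hint m) (hscore _ ▸ hint _),
    measureReal_def]
  exact mul_pos hv (escScore_pos hconv (mem_univ _) (mem_univ _) (hderiv m) hm)
end

section
/- Lexicographic multi-objective elicitability: Let X be integrable with S = X_1+...+X_d having continuous strictly increasing CDF, α ∈ (0,1), h strictly increasing, φ_j strictly convex differentiable (all with suitable integrability). Define the ℝ²-valued score S((m,v),x) = ((1{s≤v}-α)(h(v)-h(s)), Σ_j 1{s>v}(φ_j'(m_j)(m_j - x_j) - φ_j(m_j) + φ_j(x_j))). Then (m,v) ↦ E[S((m,v),X)] has a unique minimizer with respect to the lexicographic order on ℝ², namely m_j = ESC_α(X_j,S) for all j and v = VaR_α(S). -/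
/-!
Let `u = VaR_α(S)`, so that `P(S ≤ u) = α`. The VaR score satisfies, pointwise,
`s(v, y) - s(u, y) = (1{y ≤ u} - α)(h v - h u) + (1{y ≤ v} - 1{y ≤ u})(h v - h y)`.
The first term has expectation zero; the second is nonnegative by monotonicity of `h`, and
strictly positive when `S` lies between `u` and `(u + v) / 2`, an event of positive probability
because the CDF is strictly increasing at `u`. So `v = u` is forced for a lexicographic
minimizer, and then only the second component matters. There, each summand is the Bregman
divergence `D_φ(X_j, m_j)` on `{S > u}`, and `D_φ(x, m) - D_φ(x, e)` is `D_φ(e, m)` plus an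
affine function of `x - e`, which integrates to zero over `{S > u}` because `e` is the
conditional mean `ESC_α(X_j, S)`; strict convexity makes `D_φ(e, m) > 0` for `m ≠ e`.
-/

open MeasureTheory ProbabilityTheory Set

variable {Ω : Type*} [MeasureSpace Ω]

/-- Value-at-Risk at level `α`. -/
noncomputable def VaR (α : ℝ) (S : Ω → ℝ) : ℝ :=
  sInf {x : ℝ | α ≤ (ℙ {ω | S ω ≤ x}).toReal}

open Filter Topology

lemma Continuous.apply_csInf_setOf_le_eq {F : ℝ → ℝ} (hF : Continuous F) {a α : ℝ}
    (hbot : Tendsto F atBot (𝓝 a)) (haα : a < α) (hne : ∃ x, α ≤ F x) :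
    F (sInf {x | α ≤ F x}) = α := by
  obtain ⟨x₀, hx₀⟩ := eventually_atBot.mp (hbot.eventually (eventually_lt_nhds haα))
  have hbdd : BddBelow {x | α ≤ F x} :=
    ⟨x₀, fun x hx => le_of_not_gt fun hlt => (hx₀ x hlt.le).not_ge hx⟩
  refine le_antisymm ?_ ((isClosed_le continuous_const hF).csInf_mem hne hbdd)
  refine le_of_tendsto (x := 𝓝[<] sInf {x | α ≤ F x})
    (hF.continuousAt.mono_left nhdsWithin_le_nhds) ?_
  filter_upwards [self_mem_nhdsWithin] with x hx
  exact (lt_of_not_ge fun h => (csInf_le hbdd h).not_gt hx).le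

lemma measureReal_setOf_le_VaR [IsProbabilityMeasure (ℙ : Measure Ω)] {S : Ω → ℝ}
    (hS : Measurable S) (hcont : Continuous fun x => Measure.real ℙ {ω | S ω ≤ x}) {α : ℝ}
    (hα : α ∈ Ioo (0 : ℝ) 1) :
    Measure.real ℙ {ω | S ω ≤ VaR α S} = α := by
  have hcdf : (fun x => Measure.real ℙ {ω | S ω ≤ x}) = cdf (Measure.map S ℙ) := by
    have := Measure.isProbabilityMeasure_map (μ := ℙ) hS.aemeasurable
    ext x
    rw [cdf_eq_real, measureReal_def, measureReal_def, Measure.map_apply hS measurableSet_Iic]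
    rfl
  exact hcont.apply_csInf_setOf_le_eq (hcdf ▸ tendsto_cdf_atBot _) hα.1
    ((hcdf ▸ tendsto_cdf_atTop _ : Tendsto _ atTop _).eventually (eventually_ge_nhds hα.2)).exists

noncomputable def vaRScore (α : ℝ) (h : ℝ → ℝ) (v y : ℝ) : ℝ :=
  ((if y ≤ v then 1 else 0) - α) * (h v - h y)

noncomputable def vaRExcess (h : ℝ → ℝ) (u v y : ℝ) : ℝ :=
  ((if y ≤ v then 1 else 0) - (if y ≤ u then 1 else 0)) * (h v - h y)

lemma vaRScore_sub_vaRScore (α : ℝ) (h : ℝ → ℝ) (u v y : ℝ) :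
    vaRScore α h v y - vaRScore α h u y
      = ((if y ≤ u then 1 else 0) - α) * (h v - h u) + vaRExcess h u v y := by
  unfold vaRScore vaRExcess
  ring

lemma vaRExcess_nonneg {h : ℝ → ℝ} (hh : Monotone h) (u v y : ℝ) : 0 ≤ vaRExcess h u v y := by
  unfold vaRExcess
  split_ifs with hyv hyu hyu <;> norm_num
  · exact hh hyv
  · exact hh (not_le.mp hyv).le

lemma vaRExcess_pos_of_lt {h : ℝ → ℝ} (hh : StrictMono h) {u v y : ℝ} (huy : u < y) (hyv : y < v) :
    0 < vaRExcess h u v y := by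
  simp [vaRExcess, hyv.le, not_le.mpr huy, hh hyv]

lemma vaRExcess_pos_of_gt {h : ℝ → ℝ} (hh : StrictMono h) {u v y : ℝ} (hvy : v < y) (hyu : y ≤ u) :
    0 < vaRExcess h u v y := by
  simp [vaRExcess, not_le.mpr hvy, hyu, hh hvy]

lemma ite_le_eq_indicator {Ω : Type*} (S : Ω → ℝ) (u : ℝ) (ω : Ω) :
    (if S ω ≤ u then (1 : ℝ) else 0) = {ω | S ω ≤ u}.indicator 1 ω := by
  simp [indicator_apply]

section

variable {Ω : Type*} [MeasurableSpace Ω] {μ : Measure Ω}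

lemma integrable_ite_le_sub_mul [IsFiniteMeasure μ] {S : Ω → ℝ} (hS : Measurable S) (u α c : ℝ) :
    Integrable (fun ω => ((if S ω ≤ u then 1 else 0) - α) * c) μ := by
  simp_rw [ite_le_eq_indicator S u]
  exact (((integrable_const 1).indicator (measurableSet_le hS measurable_const)).sub
    (integrable_const α)).mul_const c

lemma integral_ite_le_sub_mul [IsProbabilityMeasure μ] {S : Ω → ℝ} (hS : Measurable S)
    (u α c : ℝ) :
    ∫ ω, ((if S ω ≤ u then 1 else 0) - α) * c ∂μ = (μ.real {ω | S ω ≤ u} - α) * c := by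
  have hs : MeasurableSet {ω | S ω ≤ u} := measurableSet_le hS measurable_const
  simp_rw [ite_le_eq_indicator S u]
  rw [integral_mul_const, integral_sub (f := {ω | S ω ≤ u}.indicator 1)
    (by exact (integrable_const 1).indicator hs) (integrable_const α),
    integral_indicator_one hs, integral_const, probReal_univ, one_smul]

lemma measure_Ioc_pos_of_measureReal_lt [IsFiniteMeasure μ] {S : Ω → ℝ} {a b : ℝ}
    (hab : μ.real {ω | S ω ≤ a} < μ.real {ω | S ω ≤ b}) :
    0 < μ {ω | a < S ω ∧ S ω ≤ b} := by
  have hdiff : {ω | S ω ≤ b} \ {ω | S ω ≤ a} = {ω | a < S ω ∧ S ω ≤ b} := by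
    ext ω; simp [and_comm]
  rw [← hdiff, pos_iff_ne_zero, ← measureReal_ne_zero_iff]
  linarith [le_measureReal_sdiff (μ := μ) (s₁ := {ω | S ω ≤ b}) (s₂ := {ω | S ω ≤ a})]

lemma integral_vaRExcess_pos [IsFiniteMeasure μ] {S : Ω → ℝ} {h : ℝ → ℝ} (hh : StrictMono h)
    {α u v : ℝ} (hu : μ.real {ω | S ω ≤ u} = α)
    (huniq : ∀ w, μ.real {ω | S ω ≤ w} = α → w = u)
    (hint : Integrable (fun ω => vaRExcess h u v (S ω)) μ) (hvu : v ≠ u) :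
    0 < ∫ ω, vaRExcess h u v (S ω) ∂μ := by
  rw [integral_pos_iff_support_of_nonneg (fun ω => vaRExcess_nonneg hh.monotone u v _) hint]
  have hcdf_mono : ∀ {a b : ℝ}, a ≤ b → μ.real {ω | S ω ≤ a} ≤ μ.real {ω | S ω ≤ b} :=
    fun hab => measureReal_mono fun _ hω => le_trans hω hab
  set w := (u + v) / 2 with hw_def
  have hcdf_ne : μ.real {ω | S ω ≤ w} ≠ μ.real {ω | S ω ≤ u} := fun hw => by
    have := huniq w (hw.trans hu); apply hvu; linarith
  rcases hvu.lt_or_gt with hvu | huv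
  · have hA := measure_Ioc_pos_of_measureReal_lt ((hcdf_mono (by linarith)).lt_of_ne hcdf_ne)
    exact hA.trans_le (measure_mono fun ω ⟨hwS, hSu⟩ =>
      (vaRExcess_pos_of_gt hh (by linarith) hSu).ne')
  · have hA := measure_Ioc_pos_of_measureReal_lt ((hcdf_mono (by linarith)).lt_of_ne' hcdf_ne)
    exact hA.trans_le (measure_mono fun ω ⟨huS, hSw⟩ =>
      (vaRExcess_pos_of_lt hh huS (by linarith)).ne')

lemma integral_vaRScore_lt [IsProbabilityMeasure μ] {S : Ω → ℝ} (hS : Measurable S)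
    {h : ℝ → ℝ} (hh : StrictMono h) {α u v : ℝ} (hu : μ.real {ω | S ω ≤ u} = α)
    (huniq : ∀ w, μ.real {ω | S ω ≤ w} = α → w = u)
    (hiu : Integrable (fun ω => vaRScore α h u (S ω)) μ)
    (hiv : Integrable (fun ω => vaRScore α h v (S ω)) μ) (hvu : v ≠ u) :
    ∫ ω, vaRScore α h u (S ω) ∂μ < ∫ ω, vaRScore α h v (S ω) ∂μ := by
  have hlin := integrable_ite_le_sub_mul (μ := μ) hS u α (h v - h u)
  have hdecomp : (fun ω => vaRScore α h v (S ω) - vaRScore α h u (S ω))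
      = fun ω => ((if S ω ≤ u then 1 else 0) - α) * (h v - h u) + vaRExcess h u v (S ω) :=
    funext fun ω => vaRScore_sub_vaRScore α h u v (S ω)
  have hexcess : Integrable (fun ω => vaRExcess h u v (S ω)) μ := by
    refine ((hiv.sub hiu).sub hlin).congr (ae_of_all _ fun ω => ?_)
    simp only [Pi.sub_apply, vaRScore_sub_vaRScore]
    ring
  rw [← sub_pos, ← integral_sub hiv hiu, hdecomp, integral_add hlin hexcess,
    integral_ite_le_sub_mul hS, hu, sub_self, zero_mul, zero_add]
  exact integral_vaRExcess_pos hh hu huniq hexcess hvu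

end

/-- The Bregman divergence `φ x - φ m - φ' m * (x - m)`, written in the form of the ESC score. -/
def bregmanDiv (φ φ' : ℝ → ℝ) (x m : ℝ) : ℝ :=
  φ' m * (m - x) - φ m + φ x

lemma bregmanDiv_sub_bregmanDiv (φ φ' : ℝ → ℝ) (x m e : ℝ) :
    bregmanDiv φ φ' x m - bregmanDiv φ φ' x e
      = bregmanDiv φ φ' e m + (φ' e - φ' m) * (x - e) := by
  unfold bregmanDiv
  ring

lemma StrictConvexOn.bregmanDiv_pos {φ φ' : ℝ → ℝ} (hφ : StrictConvexOn ℝ univ φ)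
    (hφ' : ∀ y, HasDerivAt φ (φ' y) y) {x m : ℝ} (hxm : x ≠ m) :
    0 < bregmanDiv φ φ' x m := by
  unfold bregmanDiv
  rcases hxm.lt_or_gt with hxm | hmx
  · have := hφ.slope_lt_of_hasDerivAt (mem_univ x) (mem_univ m) hxm (hφ' m)
    rw [slope_def_field, div_lt_iff₀ (sub_pos.mpr hxm)] at this
    linarith
  · have := hφ.lt_slope_of_hasDerivAt (mem_univ m) (mem_univ x) hmx (hφ' m)
    rw [slope_def_field, lt_div_iff₀ (sub_pos.mpr hmx)] at this
    linarith

lemma StrictConvexOn.bregmanDiv_nonneg {φ φ' : ℝ → ℝ} (hφ : StrictConvexOn ℝ univ φ)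
    (hφ' : ∀ y, HasDerivAt φ (φ' y) y) (x m : ℝ) :
    0 ≤ bregmanDiv φ φ' x m := by
  rcases eq_or_ne x m with rfl | hxm
  · simp [bregmanDiv]
  · exact (hφ.bregmanDiv_pos hφ' hxm).le

section

variable {Ω : Type*} {p : Ω → Prop} [DecidablePred p]

lemma ite_bregmanDiv_sub_ite (φ φ' : ℝ → ℝ) (Y : Ω → ℝ) (m e : ℝ) :
    (fun ω => (if p ω then bregmanDiv φ φ' (Y ω) m else 0)
        - (if p ω then bregmanDiv φ φ' (Y ω) e else 0))
      = {ω | p ω}.indicator fun ω => bregmanDiv φ φ' e m + (φ' e - φ' m) * (Y ω - e) := by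
  ext ω
  by_cases hω : p ω <;> simp [hω, bregmanDiv_sub_bregmanDiv]

variable [MeasurableSpace Ω] {μ : Measure Ω}

lemma integrable_ite_bregmanDiv_sub_ite [IsFiniteMeasure μ] (hp : MeasurableSet {ω | p ω})
    (φ φ' : ℝ → ℝ) {Y : Ω → ℝ} (hY : Integrable Y μ) (m e : ℝ) :
    Integrable (fun ω => (if p ω then bregmanDiv φ φ' (Y ω) m else 0)
      - (if p ω then bregmanDiv φ φ' (Y ω) e else 0)) μ := by
  rw [ite_bregmanDiv_sub_ite]
  exact ((integrable_const _).add ((hY.sub (integrable_const e)).const_mul _)).indicator hp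

lemma integral_ite_bregmanDiv_sub_ite [IsFiniteMeasure μ] (hp : MeasurableSet {ω | p ω})
    (hμ : μ.real {ω | p ω} ≠ 0) (φ φ' : ℝ → ℝ) {Y : Ω → ℝ} (hY : Integrable Y μ) {e : ℝ}
    (he : e = (∫ ω in {ω | p ω}, Y ω ∂μ) / μ.real {ω | p ω}) (m : ℝ) :
    ∫ ω, (if p ω then bregmanDiv φ φ' (Y ω) m else 0)
        - (if p ω then bregmanDiv φ φ' (Y ω) e else 0) ∂μ
      = μ.real {ω | p ω} * bregmanDiv φ φ' e m := by
  have hint : Integrable (fun ω => (φ' e - φ' m) * (Y ω - e)) μ :=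
    (hY.sub (integrable_const e)).const_mul _
  have hcentered : ∫ ω in {ω | p ω}, (Y ω - e) ∂μ = 0 := by
    rw [integral_sub hY.integrableOn (integrable_const e), setIntegral_const, he, smul_eq_mul]
    field_simp
    ring
  rw [ite_bregmanDiv_sub_ite, integral_indicator hp,
    integral_add (integrable_const _) hint.integrableOn,
    integral_const_mul, hcentered, setIntegral_const, smul_eq_mul, mul_zero, add_zero]

lemma integral_sum_ite_bregmanDiv_lt [IsFiniteMeasure μ] {ι : Type*} [Fintype ι]
    (hp : MeasurableSet {ω | p ω}) (hμ : 0 < μ.real {ω | p ω}) {X : ι → Ω → ℝ}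
    (hX : ∀ i, Integrable (X i) μ) {φ φ' : ι → ℝ → ℝ}
    (hφ : ∀ i, StrictConvexOn ℝ univ (φ i)) (hφ' : ∀ i y, HasDerivAt (φ i) (φ' i y) y)
    {e m : ι → ℝ} (he : ∀ i, e i = (∫ ω in {ω | p ω}, X i ω ∂μ) / μ.real {ω | p ω})
    (hie : Integrable (fun ω => ∑ i, if p ω then bregmanDiv (φ i) (φ' i) (X i ω) (e i) else 0) μ)
    (him : Integrable (fun ω => ∑ i, if p ω then bregmanDiv (φ i) (φ' i) (X i ω) (m i) else 0) μ)
    (hme : m ≠ e) :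
    ∫ ω, ∑ i, (if p ω then bregmanDiv (φ i) (φ' i) (X i ω) (e i) else 0) ∂μ
      < ∫ ω, ∑ i, (if p ω then bregmanDiv (φ i) (φ' i) (X i ω) (m i) else 0) ∂μ := by
  rw [← sub_pos, ← integral_sub him hie]
  simp_rw [← Finset.sum_sub_distrib]
  rw [integral_finsetSum _ fun i _ =>
    integrable_ite_bregmanDiv_sub_ite hp (φ i) (φ' i) (hX i) (m i) (e i)]
  simp_rw [integral_ite_bregmanDiv_sub_ite hp hμ.ne' _ _ (hX _) (he _)]
  obtain ⟨i, hi⟩ := Function.ne_iff.mp hme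
  exact Finset.sum_pos' (fun j _ => mul_nonneg hμ.le ((hφ j).bregmanDiv_nonneg (hφ' j) _ _))
    ⟨i, Finset.mem_univ i, mul_pos hμ ((hφ i).bregmanDiv_pos (hφ' i) (Ne.symm hi))⟩

end

theorem stmt12_general [IsProbabilityMeasure (ℙ : Measure Ω)]
    (d : ℕ) (X : Fin d → Ω → ℝ)
    (hXmeas : ∀ i, Measurable (X i)) (hXint : ∀ i, Integrable (X i) ℙ)
    (S : Ω → ℝ) (hS : ∀ ω, S ω = ∑ i, X i ω)
    (F : ℝ → ℝ) (hF : ∀ x, F x = (ℙ {ω | S ω ≤ x}).toReal)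
    (hcont : Continuous F)
    (hmono : StrictMonoOn F {x | F x ∈ Ioo 0 1})
    (α : ℝ) (hα : α ∈ Ioo (0:ℝ) 1)
    (h : ℝ → ℝ) (hh : StrictMono h)
    (φ φ' : Fin d → ℝ → ℝ)
    (hconv : ∀ j, StrictConvexOn ℝ Set.univ (φ j))
    (hderiv : ∀ j y, HasDerivAt (φ j) (φ' j y) y)
    (hintVaR : ∀ v : ℝ,
      Integrable (fun ω => ((if S ω ≤ v then (1:ℝ) else 0) - α) * (h v - h (S ω))) ℙ)
    (hintESC : ∀ (m : Fin d → ℝ) (v : ℝ),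
      Integrable (fun ω => ∑ j, if v < S ω then
        φ' j (m j) * (m j - X j ω) - φ j (m j) + φ j (X j ω) else 0) ℙ)
    (ESC : Fin d → ℝ)
    (hESC : ∀ j, ESC j
      = (∫ ω in {ω | VaR α S < S ω}, X j ω) / (ℙ {ω | VaR α S < S ω}).toReal) :
    ∀ (m : Fin d → ℝ) (v : ℝ), (m, v) ≠ (ESC, VaR α S) →
      (toLex (
          (∫ ω, ((if S ω ≤ VaR α S then (1:ℝ) else 0) - α) * (h (VaR α S) - h (S ω))),
          (∫ ω, ∑ j, if VaR α S < S ω then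
            φ' j (ESC j) * (ESC j - X j ω) - φ j (ESC j) + φ j (X j ω) else 0)) : ℝ ×ₗ ℝ)
        < toLex (
          (∫ ω, ((if S ω ≤ v then (1:ℝ) else 0) - α) * (h v - h (S ω))),
          (∫ ω, ∑ j, if v < S ω then
            φ' j (m j) * (m j - X j ω) - φ j (m j) + φ j (X j ω) else 0)) := by
  intro m v hmv
  obtain rfl : F = fun x => Measure.real ℙ {ω | S ω ≤ x} := funext hF
  have hSm : Measurable S := by
    rw [show S = fun ω => ∑ i, X i ω from funext hS]
    exact Finset.measurable_sum _ fun i _ => hXmeas i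
  have hu := measureReal_setOf_le_VaR hSm hcont hα
  rw [Prod.Lex.lt_iff]
  rcases eq_or_ne v (VaR α S) with rfl | hv
  · have hT : Measure.real ℙ {ω | VaR α S < S ω} = 1 - α := by
      have hcompl : {ω | VaR α S < S ω} = {ω | S ω ≤ VaR α S}ᶜ := by ext; simp
      rw [hcompl, probReal_compl_eq_one_sub (measurableSet_le hSm measurable_const), hu]
    refine Or.inr ⟨rfl, integral_sum_ite_bregmanDiv_lt (measurableSet_lt measurable_const hSm)
      (hT ▸ sub_pos.mpr hα.2) hXint hconv hderiv hESC (hintESC ESC _) (hintESC m _) ?_⟩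
    rintro rfl
    exact hmv rfl
  · refine Or.inl (integral_vaRScore_lt hSm hh hu (fun w hw => ?_) (hintVaR _) (hintVaR v) hv)
    exact hmono.injOn (by simpa [hw] using hα) (by simpa [hu] using hα) (hw.trans hu.symm)

/-- Lexicographic multi-objective elicitability: the expected ℝ²-valued score
has the tuple `(ESC_α(X_1,S),…,ESC_α(X_d,S), VaR_α(S))` as its unique minimizer
with respect to the lexicographic order on ℝ². -/
theorem stmt12 [IsProbabilityMeasure (ℙ : Measure Ω)]
    (d : ℕ) (X : Fin d → Ω → ℝ)
    (hXmeas : ∀ i, Measurable (X i)) (hXint : ∀ i, Integrable (X i) ℙ)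
    (S : Ω → ℝ) (hS : ∀ ω, S ω = ∑ i, X i ω)
    (F : ℝ → ℝ) (hF : ∀ x, F x = (ℙ {ω | S ω ≤ x}).toReal)
    (hcont : Continuous F)
    (hmono : StrictMonoOn F {x | F x ∈ Ioo 0 1})
    (α : ℝ) (hα : α ∈ Ioo (0:ℝ) 1)
    (h : ℝ → ℝ) (hh : StrictMono h)
    (hhint : Integrable (fun ω => h (S ω)) ℙ)
    (φ φ' : Fin d → ℝ → ℝ)
    (hconv : ∀ j, StrictConvexOn ℝ Set.univ (φ j))
    (hderiv : ∀ j y, HasDerivAt (φ j) (φ' j y) y)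
    (hintVaR : ∀ v : ℝ,
      Integrable (fun ω => ((if S ω ≤ v then (1:ℝ) else 0) - α) * (h v - h (S ω))) ℙ)
    (hintESC : ∀ (m : Fin d → ℝ) (v : ℝ),
      Integrable (fun ω => ∑ j, if v < S ω then
        φ' j (m j) * (m j - X j ω) - φ j (m j) + φ j (X j ω) else 0) ℙ)
    (ESC : Fin d → ℝ)
    (hESC : ∀ j, ESC j
      = (∫ ω in {ω | VaR α S < S ω}, X j ω) / (ℙ {ω | VaR α S < S ω}).toReal) :
    ∀ (m : Fin d → ℝ) (v : ℝ), (m, v) ≠ (ESC, VaR α S) →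
      (toLex (
          (∫ ω, ((if S ω ≤ VaR α S then (1:ℝ) else 0) - α) * (h (VaR α S) - h (S ω))),
          (∫ ω, ∑ j, if VaR α S < S ω then
            φ' j (ESC j) * (ESC j - X j ω) - φ j (ESC j) + φ j (X j ω) else 0)) : ℝ ×ₗ ℝ)
        < toLex (
          (∫ ω, ((if S ω ≤ v then (1:ℝ) else 0) - α) * (h v - h (S ω))),
          (∫ ω, ∑ j, if v < S ω then
            φ' j (m j) * (m j - X j ω) - φ j (m j) + φ j (X j ω) else 0)) :=
  stmt12_general d X hXmeas hXint S hS F hF hcont hmono α hα h hh φ φ' hconv hderiv hintVaR hintESC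
    ESC hESC
end
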